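/- Let i ≥ 1 and suppose χ_i := q11^{i²}·q12^i·q21^i·q22 satisfies χ_i = −1. Then (D₁^{i-1} ∘ D₂)(z_i²) = c_i·z_{i+1}, where c_i := q21^{-i}·b_i·[i]!_{q11^{-1}}. -/

import Mathlib

noncomputable section

variable {k : Type*} [Field k]

/-- The algebra endomorphism of the free algebra on two generators with
`x1 ↦ a • x1`, `x2 ↦ b • x2`. -/
def alph (a b : k) : FreeAlgebra k (Fin 2) →ₐ[k] FreeAlgebra k (Fin 2) :=
  FreeAlgebra.lift k ![a • FreeAlgebra.ι k 0, b • FreeAlgebra.ι k 1]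

/-- The elements `z_i`, defined by `z_0 = x2`, `z_{i+1} = x1·z_i − q11^i·q12·z_i·x1`. -/
def zz (q11 q12 : k) : ℕ → FreeAlgebra k (Fin 2)
  | 0 => FreeAlgebra.ι k 1
  | (i + 1) => FreeAlgebra.ι k 0 * zz q11 q12 i
      - (q11 ^ i * q12) • (zz q11 q12 i * FreeAlgebra.ι k 0)

/-- The elements `u_i`, defined by `u_0 = x1`, `u_{i+1} = u_i·x2 − q12·q22^i·x2·u_i`. -/
def uu (q12 q22 : k) : ℕ → FreeAlgebra k (Fin 2)
  | 0 => FreeAlgebra.ι k 0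
  | (i + 1) => uu q12 q22 i * FreeAlgebra.ι k 1
      - (q12 * q22 ^ i) • (FreeAlgebra.ι k 1 * uu q12 q22 i)

/-- The q-number `[m]_p = 1 + p + ⋯ + p^{m-1}`. -/
def qnum (p : k) (m : ℕ) : k := ∑ j ∈ Finset.range m, p ^ j

/-- The q-factorial `[m]!_p = [1]_p·[2]_p⋯[m]_p`. -/
def qfact (p : k) (m : ℕ) : k := ∏ l ∈ Finset.range m, qnum p (l + 1)

/-- `b_i = ∏_{j=0}^{i-1} (1 − q11^j·q12·q21)`. -/
def bb (q11 q12 q21 : k) (i : ℕ) : k :=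
  ∏ j ∈ Finset.range i, (1 - q11 ^ j * q12 * q21)

/-- `c_i = q21^{-i}·b_i·[i]!_{q11⁻¹}`. -/
def cc (q11 q12 q21 : k) (i : ℕ) : k :=
  q21⁻¹ ^ i * bb q11 q12 q21 i * qfact q11⁻¹ i

/-- `d_{i,0}`. -/
def dd (q11 q12 q21 q22 : k) (i : ℕ) : k :=
  q21⁻¹ * (1 - q11 ^ i * q12 * q21) * qnum q11⁻¹ (i + 1)
    + (q11 ^ (i * (i + 1)) * q12 ^ i * q21 ^ (i + 1) * q22)⁻¹
    - q11 ^ (i * (i + 1)) * q12 ^ (i + 1) * q21 ^ i * q22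

/-! Both skew derivations are controlled on the `z_i`: `α₁` and `α₂` act on `z_i` by scalars,
`D₁` kills every `z_i`, and `D₂ z_i` is a multiple of `x₁^i`. Hence
`D₂(z_i²) = D₂(z_i) z_i + α₂(z_i) D₂(z_i)` is a combination of `x₁^i z_i` and `z_i x₁^i`, and
`D₁^{i-1}` lowers both powers of `x₁` to one, producing `[i]!`. The coefficient of `z_i x₁` picks up
`χ_i⁻¹ q11^i q12`, which is `-q11^i q12` exactly when `χ_i = -1`; the result is then a multiple of
`z_{i+1} = x₁ z_i - q11^i q12 z_i x₁`. -/

local notation "𝔽" => FreeAlgebra k (Fin 2)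
local notation "x₁" => FreeAlgebra.ι k (0 : Fin 2)
local notation "x₂" => FreeAlgebra.ι k (1 : Fin 2)

@[simp]
lemma alph_ι_zero (a b : k) : alph a b x₁ = a • x₁ := by
  simp [alph]

@[simp]
lemma alph_ι_one (a b : k) : alph a b x₂ = b • x₂ := by
  simp [alph]

lemma alph_zz (a b q11 q12 : k) (i : ℕ) :
    alph a b (zz q11 q12 i) = (a ^ i * b) • zz q11 q12 i := by
  induction i with
  | zero => simp [zz]
  | succ n ih =>
    simp only [zz, map_sub, map_mul, map_smul, ih, alph_ι_zero, smul_mul_smul_comm, smul_sub,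
      smul_smul]
    congr 2 <;> ring

lemma qfact_one_add (p : k) (t : ℕ) :
    qfact p (1 + t) = ∏ j ∈ Finset.range t, qnum p (1 + j + 1) := by
  simp [qfact, Finset.prod_range_add, qnum]

lemma prod_inv_sub_eq_bb {q21 : k} (q11 q12 : k) (hq21 : q21 ≠ 0) (i : ℕ) :
    ∏ j ∈ Finset.range i, (q21⁻¹ - q11 ^ j * q12) = q21⁻¹ ^ i * bb q11 q12 q21 i := by
  rw [bb, Finset.pow_eq_prod_const, ← Finset.prod_mul_distrib]
  refine Finset.prod_congr rfl fun j _ => ?_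
  field_simp

section SkewDerivation

variable {a b : k} {D : FreeAlgebra k (Fin 2) →ₗ[k] FreeAlgebra k (Fin 2)}

lemma skewDeriv_ι_zero_pow (hx₁ : D x₁ = 1)
    (hmul : ∀ u v : 𝔽, D (u * v) = D u * v + alph a b u * D v) (m : ℕ) :
    D (x₁ ^ (m + 1)) = qnum a (m + 1) • x₁ ^ m := by
  induction m with
  | zero => simp [qnum, hx₁]
  | succ n ih =>
    rw [pow_succ, hmul, ih, hx₁, map_pow, alph_ι_zero, smul_pow, mul_one, smul_mul_assoc,
      ← pow_succ, qnum, qnum, Finset.sum_range_succ _ (n + 1), add_smul]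

lemma skewDeriv_zz (q11 q12 : k) (hx₁ : D x₁ = 0) (hx₂ : D x₂ = 1)
    (hmul : ∀ u v : 𝔽, D (u * v) = D u * v + alph a b u * D v) (i : ℕ) :
    D (zz q11 q12 i) = (∏ j ∈ Finset.range i, (a - q11 ^ j * q12)) • x₁ ^ i := by
  induction i with
  | zero => simp [zz, hx₂]
  | succ n ih =>
    rw [zz, map_sub, map_smul, hmul, hmul, ih, hx₁, alph_ι_zero, Finset.prod_range_succ]
    simp only [zero_mul, mul_zero, zero_add, add_zero, smul_mul_assoc, mul_smul_comm, smul_smul,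
      ← pow_succ', ← pow_succ, ← sub_smul]
    ring_nf

lemma skewDeriv_zz_eq_zero {q11 q12 : k} (hq11 : q11 ≠ 0) (hq12 : q12 ≠ 0)
    (hx₁ : D x₁ = 1) (hx₂ : D x₂ = 0)
    (hmul : ∀ u v : 𝔽, D (u * v) = D u * v + alph q11⁻¹ q12⁻¹ u * D v) (i : ℕ) :
    D (zz q11 q12 i) = 0 := by
  induction i with
  | zero => simpa [zz] using hx₂
  | succ n ih =>
    rw [zz, map_sub, map_smul, hmul, hmul, ih, hx₁, alph_zz]
    simp only [mul_zero, mul_one, zero_mul, one_mul, add_zero, zero_add, smul_smul]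
    rw [mul_mul_mul_comm, ← mul_pow, mul_inv_cancel₀ hq11, one_pow, one_mul,
      mul_inv_cancel₀ hq12, one_smul, sub_self]

lemma skewDeriv_pow_apply_ι_zero_pow_mul {y : 𝔽} (hx₁ : D x₁ = 1) (hy : D y = 0)
    (hmul : ∀ u v : 𝔽, D (u * v) = D u * v + alph a b u * D v) (t m : ℕ) :
    (D ^ t) (x₁ ^ (m + t) * y) = (∏ j ∈ Finset.range t, qnum a (m + j + 1)) • (x₁ ^ m * y) := by
  induction t with
  | zero => simp
  | succ t ih =>
    rw [pow_succ, Module.End.mul_apply, ← add_assoc, hmul, skewDeriv_ι_zero_pow hx₁ hmul, hy,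
      mul_zero, add_zero, smul_mul_assoc, map_smul, ih, smul_smul, Finset.prod_range_succ, mul_comm]

lemma skewDeriv_pow_apply_mul_ι_zero_pow {y : 𝔽} {γ : k} (hx₁ : D x₁ = 1) (hy : D y = 0)
    (hαy : alph a b y = γ • y)
    (hmul : ∀ u v : 𝔽, D (u * v) = D u * v + alph a b u * D v) (t m : ℕ) :
    (D ^ t) (y * x₁ ^ (m + t))
      = (γ ^ t * ∏ j ∈ Finset.range t, qnum a (m + j + 1)) • (y * x₁ ^ m) := by
  induction t with
  | zero => simp
  | succ t ih =>
    rw [pow_succ, Module.End.mul_apply, ← add_assoc, hmul, skewDeriv_ι_zero_pow hx₁ hmul, hy, hαy,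
      zero_mul, zero_add, smul_mul_smul_comm, map_smul, ih, smul_smul, Finset.prod_range_succ,
      pow_succ]
    congr 1
    ring

end SkewDerivation

theorem D1_pow_D2_z_sq_general
    (q11 q12 q21 q22 : k)
    (hq11 : q11 ≠ 0) (hq12 : q12 ≠ 0) (hq21 : q21 ≠ 0)
    (D1 : FreeAlgebra k (Fin 2) →ₗ[k] FreeAlgebra k (Fin 2))
    (hD1x1 : D1 (FreeAlgebra.ι k 0) = 1)
    (hD1x2 : D1 (FreeAlgebra.ι k 1) = 0)
    (hD1mul : ∀ a b : FreeAlgebra k (Fin 2),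
      D1 (a * b) = D1 a * b + alph q11⁻¹ q12⁻¹ a * D1 b)
    (D2 : FreeAlgebra k (Fin 2) →ₗ[k] FreeAlgebra k (Fin 2))
    (hD2x1 : D2 (FreeAlgebra.ι k 0) = 0)
    (hD2x2 : D2 (FreeAlgebra.ι k 1) = 1)
    (hD2mul : ∀ a b : FreeAlgebra k (Fin 2),
      D2 (a * b) = D2 a * b + alph q21⁻¹ q22⁻¹ a * D2 b)
    (i : ℕ) (hi : 1 ≤ i)
    (hchi : q11 ^ (i ^ 2) * q12 ^ i * q21 ^ i * q22 = -1) :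
    (⇑D1)^[i - 1] (D2 (zz q11 q12 i ^ 2))
      = cc q11 q12 q21 i • zz q11 q12 (i + 1) := by
  obtain ⟨n, rfl⟩ : ∃ n, i = n + 1 := ⟨i - 1, by omega⟩
  set z := zz q11 q12 (n + 1)
  set β := q21⁻¹ ^ (n + 1) * bb q11 q12 q21 (n + 1)
  have hD2z : D2 z = β • x₁ ^ (1 + n) := by
    rw [skewDeriv_zz q11 q12 hD2x1 hD2x2 hD2mul, prod_inv_sub_eq_bb q11 q12 hq21, add_comm 1 n]
  have hD2sq : D2 (z ^ 2) = β • (x₁ ^ (1 + n) * z)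
      + (β * (q21⁻¹ ^ (n + 1) * q22⁻¹)) • (z * x₁ ^ (1 + n)) := by
    rw [sq, hD2mul, hD2z, alph_zz, smul_mul_assoc, smul_mul_smul_comm, mul_comm β]
  -- `χ_{n+1} = -1` is exactly what makes the two terms recombine into `z_{n+2}`
  have hχ : (q11⁻¹ ^ (n + 1) * q12⁻¹) ^ n * (q21⁻¹ ^ (n + 1) * q22⁻¹)
      = -(q11 ^ (n + 1) * q12) := by
    have hX : (q11 ^ ((n + 1) * n) * q12 ^ n * q21 ^ (n + 1) * q22) * (q11 ^ (n + 1) * q12)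
        = -1 := by
      rw [← hchi]
      ring
    calc (q11⁻¹ ^ (n + 1) * q12⁻¹) ^ n * (q21⁻¹ ^ (n + 1) * q22⁻¹)
        = (q11 ^ ((n + 1) * n) * q12 ^ n * q21 ^ (n + 1) * q22)⁻¹ := by ring
      _ = -(q11 ^ (n + 1) * q12) := inv_eq_of_mul_eq_one_right (by rw [mul_neg, hX, neg_neg])
  have hD1z := skewDeriv_zz_eq_zero hq11 hq12 hD1x1 hD1x2 hD1mul (n + 1)
  rw [hD2sq, Nat.add_sub_cancel, ← Module.End.pow_apply, map_add, map_smul, map_smul,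
    skewDeriv_pow_apply_ι_zero_pow_mul hD1x1 hD1z hD1mul,
    skewDeriv_pow_apply_mul_ι_zero_pow hD1x1 hD1z (alph_zz _ _ _ _ _) hD1mul, cc, ← qfact_one_add,
    pow_one, add_comm 1 n]
  show _ = _ • (x₁ * z - (q11 ^ (n + 1) * q12) • (z * x₁))
  linear_combination (norm := module) hχ • ((β * qfact q11⁻¹ (n + 1)) • (z * x₁))

theorem D1_pow_D2_z_sq
    (q11 q12 q21 q22 : k)
    (hq11 : q11 ≠ 0) (hq12 : q12 ≠ 0) (hq21 : q21 ≠ 0) (hq22 : q22 ≠ 0)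
    (D1 : FreeAlgebra k (Fin 2) →ₗ[k] FreeAlgebra k (Fin 2))
    (hD1one : D1 1 = 0)
    (hD1x1 : D1 (FreeAlgebra.ι k 0) = 1)
    (hD1x2 : D1 (FreeAlgebra.ι k 1) = 0)
    (hD1mul : ∀ a b : FreeAlgebra k (Fin 2),
      D1 (a * b) = D1 a * b + alph q11⁻¹ q12⁻¹ a * D1 b)
    (D2 : FreeAlgebra k (Fin 2) →ₗ[k] FreeAlgebra k (Fin 2))
    (hD2one : D2 1 = 0)
    (hD2x1 : D2 (FreeAlgebra.ι k 0) = 0)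
    (hD2x2 : D2 (FreeAlgebra.ι k 1) = 1)
    (hD2mul : ∀ a b : FreeAlgebra k (Fin 2),
      D2 (a * b) = D2 a * b + alph q21⁻¹ q22⁻¹ a * D2 b)
    (i : ℕ) (hi : 1 ≤ i)
    (hchi : q11 ^ (i ^ 2) * q12 ^ i * q21 ^ i * q22 = -1) :
    (⇑D1)^[i - 1] (D2 (zz q11 q12 i ^ 2))
      = cc q11 q12 q21 i • zz q11 q12 (i + 1) :=
  D1_pow_D2_z_sq_general q11 q12 q21 q22 hq11 hq12 hq21 D1 hD1x1 hD1x2 hD1mul D2 hD2x1 hD2x2 hD2mul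
    i hi hchi
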